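/- arXiv:2203.16471 — 8 statements merged into one kernel-verified Lean document; each statement's English description precedes it below -/
import Mathlib

section
/- Let X be a metric space, α > 0, and let E ⊆ X be a Borel set with 0 < H^α(E) < ∞. Then for H^α-almost every x ∈ E the following holds: for every ε > 0 there exists δ > 0 such that every set S ⊆ X with x ∈ S and diam S < δ satisfies H^α(E ∩ S) ≤ (1+ε)·(diam S)^α. -/
open MeasureTheory Filter Set Metric
open scoped ENNReal NNReal

/-- Core estimate: the set of points of `E` at which some arbitrarily small set `S`
has `ℋᵅ(E ∩ S) > t₀ (diam S)ᵅ` is `ℋᵅ`-null, provided `t₀ > 1`. -/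
theorem federer_key {X : Type*} [MetricSpace X] [MeasurableSpace X] [BorelSpace X]
    {α : ℝ} (hα : 0 < α) {E : Set X} (hE : MeasurableSet E) (hfin : μH[α] E < ⊤)
    {t0 : ℝ≥0∞} (ht1 : 1 < t0) (htop : t0 ≠ ⊤) :
    μH[α] {x | x ∈ E ∧ ∀ δ : ℝ, 0 < δ → ∃ S : Set X, x ∈ S ∧
      EMetric.diam S < ENNReal.ofReal δ ∧ t0 * EMetric.diam S ^ α < μH[α] (E ∩ S)} = 0 := by
  classical
  set A : Set X := {x | x ∈ E ∧ ∀ δ : ℝ, 0 < δ → ∃ S : Set X, x ∈ S ∧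
      EMetric.diam S < ENNReal.ofReal δ ∧ t0 * EMetric.diam S ^ α < μH[α] (E ∩ S)} with hAdef
  have ht0 : t0 ≠ 0 := (zero_lt_one.trans ht1).ne'
  have hAE : A ⊆ E := fun x hx => hx.1
  have hmfin : μH[α] A < ⊤ := lt_of_le_of_lt (measure_mono hAE) hfin
  haveI : IsFiniteMeasure ((μH[α] : Measure X).restrict E) :=
    ⟨by rwa [Measure.restrict_apply_univ]⟩
  -- main estimate
  have main : ∀ ε : ℝ≥0∞, 0 < ε → ε ≠ ⊤ → μH[α] A ≤ t0⁻¹ * (μH[α] A + ε) + ε := by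
    intro ε hε hεtop
    have hAε : (μH[α] : Measure X).restrict E A < μH[α] A + ε := by
      rw [Measure.restrict_apply' hE, Set.inter_eq_self_of_subset_left hAE]
      exact ENNReal.lt_add_right hmfin.ne hε.ne'
    obtain ⟨U, hAU, hUo, hUlt⟩ := Set.exists_isOpen_lt_of_lt A _ hAε
    have hUE : μH[α] (U ∩ E) < μH[α] A + ε := by
      rwa [Measure.restrict_apply' hE] at hUlt
    refine le_trans (le_of_eq (MeasureTheory.Measure.hausdorffMeasure_apply α A))
      (iSup₂_le fun r hr => ?_)
    -- pick a scale δ with 5 * ofReal δ ≤ r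
    obtain ⟨δ, hδ0, hδr⟩ : ∃ δ : ℝ, 0 < δ ∧ 5 * ENNReal.ofReal δ ≤ r := by
      rcases eq_or_ne r ⊤ with h | h
      · exact ⟨1, one_pos, by simp [h]⟩
      · have hrt : (0:ℝ) < r.toReal := ENNReal.toReal_pos hr.ne' h
        refine ⟨r.toReal / 5, by positivity, ?_⟩
        have h5 : ((5 : ℝ≥0∞)) = ENNReal.ofReal (5 : ℝ) := by simp
        rw [h5, ← ENNReal.ofReal_mul (by norm_num)]
        rw [show (5 : ℝ) * (r.toReal / 5) = r.toReal by ring, ENNReal.ofReal_toReal h]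
    -- the fine family of bad sets
    set T : Set (Set X) := {S | S.Nonempty ∧ IsClosed S ∧ S ⊆ U ∧
        EMetric.diam S ≤ ENNReal.ofReal δ ∧ t0 * EMetric.diam S ^ α < μH[α] (E ∩ S)} with hT
    have fine : ∀ x ∈ A, ∀ ρ : ℝ, 0 < ρ →
        ∃ S ∈ T, x ∈ S ∧ EMetric.diam S ≤ ENNReal.ofReal ρ := by
      intro x hx ρ hρ
      obtain ⟨r₁, hr₁, hball⟩ := Metric.isOpen_iff.1 hUo x (hAU hx)
      set ρ' : ℝ := min δ (min ρ (r₁ / 2)) with hρ'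
      have hρ'0 : 0 < ρ' := lt_min hδ0 (lt_min hρ (by positivity))
      obtain ⟨S', hxS', hdS', hmS'⟩ := hx.2 ρ' hρ'0
      refine ⟨closure S', ⟨⟨x, subset_closure hxS'⟩, isClosed_closure, ?_, ?_, ?_⟩,
        subset_closure hxS', ?_⟩
      · -- closure S' ⊆ U
        have hsub : S' ⊆ Metric.closedBall x (r₁ / 2) := by
          intro y hy
          have h1 : edist y x ≤ EMetric.diam S' := EMetric.edist_le_diam_of_mem hy hxS'
          have h2 : edist y x < ENNReal.ofReal (r₁ / 2) :=
            lt_of_le_of_lt h1 (lt_of_lt_of_le hdS'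
              (ENNReal.ofReal_le_ofReal (le_trans (min_le_right _ _) (min_le_right _ _))))
          exact Metric.mem_closedBall.2 (edist_lt_ofReal.1 h2).le
        refine (closure_minimal hsub Metric.isClosed_closedBall).trans ?_
        exact (Metric.closedBall_subset_ball (by linarith)).trans hball
      · rw [show EMetric.diam (closure S') = EMetric.diam S' from EMetric.diam_closure S']
        exact le_trans hdS'.le (ENNReal.ofReal_le_ofReal (min_le_left _ _))
      · rw [show EMetric.diam (closure S') = EMetric.diam S' from EMetric.diam_closure S']
        exact lt_of_lt_of_le hmS' (measure_mono (Set.inter_subset_inter_right E subset_closure))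
      · rw [show EMetric.diam (closure S') = EMetric.diam S' from EMetric.diam_closure S']
        exact le_trans hdS'.le (ENNReal.ofReal_le_ofReal
          (le_trans (min_le_right _ _) (min_le_left _ _)))
    -- Vitali covering lemma
    obtain ⟨u, huT, hdisj, hVit⟩ :=
      Vitali.exists_disjoint_subfamily_covering_enlargement (id : Set X → Set X) T
        (fun S => (EMetric.diam S).toReal) 2 one_lt_two
        (fun S _ => ENNReal.toReal_nonneg) δ
        (fun S hS => ENNReal.toReal_le_of_le_ofReal hδ0.le hS.2.2.2.1)
        (fun S hS => hS.1)
    have hdiamfin : ∀ S ∈ u, EMetric.diam S ≠ ⊤ := fun S hS =>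
      ((huT hS).2.2.2.1.trans_lt ENNReal.ofReal_lt_top).ne
    have hposm : ∀ S ∈ u, 0 < μH[α] (E ∩ S) := fun S hS =>
      lt_of_le_of_lt zero_le (huT hS).2.2.2.2
    -- countability
    have hpair : Pairwise (Function.onFun Disjoint fun i : ↥u => E ∩ (i : Set X)) := by
      intro i j hij
      have hd : Disjoint ((i : Set X)) ((j : Set X)) :=
        hdisj i.2 j.2 (Subtype.coe_injective.ne hij)
      exact hd.mono Set.inter_subset_right Set.inter_subset_right
    have hmeas : ∀ i : ↥u, MeasurableSet (E ∩ (i : Set X)) := fun i =>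
      hE.inter (huT i.2).2.1.measurableSet
    have huc : u.Countable := by
      have hcnt := MeasureTheory.Measure.countable_meas_pos_of_disjoint_of_meas_iUnion_ne_top
        (μH[α] : Measure X) hmeas hpair
        (by
          refine ne_top_of_le_ne_top hfin.ne (measure_mono ?_)
          exact Set.iUnion_subset fun i => Set.inter_subset_left)
      have huniv : {i : ↥u | 0 < μH[α] (E ∩ (i : Set X))} = Set.univ := by
        ext i; simp [hposm i.1 i.2]
      rw [huniv] at hcnt
      rw [← Set.countable_coe_iff]
      exact Set.countable_univ_iff.1 hcnt
    haveI : Countable ↥u := huc.to_subtype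
    -- sum estimates
    have hsum1 : ∑' i : ↥u, μH[α] (E ∩ (i : Set X)) ≤ μH[α] A + ε := by
      rw [← measure_iUnion hpair hmeas]
      refine le_trans (measure_mono ?_) hUE.le
      rintro y hy
      simp only [Set.mem_iUnion] at hy
      obtain ⟨i, hyE, hyi⟩ := hy
      exact ⟨(huT i.2).2.2.1 hyi, hyE⟩
    have hsum2 : ∑' i : ↥u, EMetric.diam (i : Set X) ^ α ≤ t0⁻¹ * (μH[α] A + ε) := by
      have hterm : ∀ i : ↥u, EMetric.diam (i : Set X) ^ α ≤ t0⁻¹ * μH[α] (E ∩ (i : Set X)) := by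
        intro i
        calc EMetric.diam (i : Set X) ^ α
            = t0⁻¹ * (t0 * EMetric.diam (i : Set X) ^ α) := by
              rw [← mul_assoc, ENNReal.inv_mul_cancel ht0 htop, one_mul]
          _ ≤ t0⁻¹ * μH[α] (E ∩ (i : Set X)) :=
              mul_le_mul_right (huT i.2).2.2.2.2.le t0⁻¹
      calc ∑' i : ↥u, EMetric.diam (i : Set X) ^ α
          ≤ ∑' i : ↥u, t0⁻¹ * μH[α] (E ∩ (i : Set X)) := ENNReal.tsum_le_tsum hterm
        _ = t0⁻¹ * ∑' i : ↥u, μH[α] (E ∩ (i : Set X)) := ENNReal.tsum_mul_left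
        _ ≤ t0⁻¹ * (μH[α] A + ε) := mul_le_mul_right hsum1 _
    have hAεtop : μH[α] A + ε ≠ ⊤ := ENNReal.add_ne_top.2 ⟨hmfin.ne, hεtop⟩
    have hsne : ∑' i : ↥u, EMetric.diam (i : Set X) ^ α ≠ ⊤ :=
      ne_top_of_le_ne_top (ENNReal.mul_ne_top (ENNReal.inv_ne_top.2 ht0) hAεtop) hsum2
    -- tail estimate
    have h5αtop : (5 : ℝ≥0∞) ^ α ≠ ⊤ := ENNReal.rpow_ne_top_of_nonneg hα.le (by norm_num)
    have h5α0 : (5 : ℝ≥0∞) ^ α ≠ 0 := (ENNReal.rpow_pos (by norm_num) (by norm_num)).ne'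
    set ε₂ : ℝ≥0∞ := ε / 5 ^ α with hε₂def
    have hε₂0 : 0 < ε₂ := ENNReal.div_pos hε.ne' h5αtop
    obtain ⟨w, hw⟩ := ((ENNReal.tendsto_tsum_compl_atTop_zero hsne).eventually
      (gt_mem_nhds hε₂0)).exists
    set v : Finset (Set X) := w.image Subtype.val with hvdef
    have hmemv : ∀ i : ↥u, ((i : Set X) ∈ v ↔ i ∈ w) := by
      intro i
      constructor
      · intro h
        obtain ⟨j, hj, hji⟩ := Finset.mem_image.1 h
        rwa [← Subtype.ext hji]
      · intro h
        exact Finset.mem_image.2 ⟨i, h, rfl⟩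
    -- the covering sets
    set cov : ↥u → Set X := fun i => if (i : Set X) ∈ v then (i : Set X)
      else Metric.cthickening (2 * (EMetric.diam (i : Set X)).toReal) (i : Set X) with hcovdef
    have hcovdiam : ∀ i : ↥u, EMetric.diam (cov i) ≤ 5 * EMetric.diam (i : Set X) := by
      intro i
      by_cases h : (i : Set X) ∈ v
      · simp only [cov, if_pos h]
        exact le_mul_of_one_le_left zero_le (by norm_num)
      · simp only [cov, if_neg h]
        have hfin' : EMetric.diam (i : Set X) ≠ ⊤ := hdiamfin _ i.2
        have hnn : (0 : ℝ) ≤ 2 * (EMetric.diam (i : Set X)).toReal := by positivity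
        rw [← Real.coe_toNNReal _ hnn]
        refine le_trans (Metric.ediam_cthickening_le _) ?_
        have hcoe : (((2 * (EMetric.diam (i : Set X)).toReal).toNNReal : ℝ≥0) : ℝ≥0∞)
            = 2 * EMetric.diam (i : Set X) := by
          rw [show (((2 * (EMetric.diam (i : Set X)).toReal).toNNReal : ℝ≥0) : ℝ≥0∞)
              = ENNReal.ofReal (2 * (EMetric.diam (i : Set X)).toReal) from rfl,
            ENNReal.ofReal_mul (by norm_num), ENNReal.ofReal_ofNat,
            ENNReal.ofReal_toReal hfin']
        rw [hcoe]
        refine le_of_eq ?_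
        delta EMetric.diam
        ring
    have hcovdiam' : ∀ i : ↥u, EMetric.diam (cov i) ≤ r := fun i =>
      le_trans (hcovdiam i)
        (le_trans (mul_le_mul_right (huT i.2).2.2.2.1 5) hδr)
    -- covering property
    have hcover : A ⊆ ⋃ i : ↥u, cov i := by
      intro x hx
      set W : Set X := ⋃ S ∈ (v : Set (Set X)), S with hWdef
      have hWclosed : IsClosed W := by
        refine Set.Finite.isClosed_biUnion v.finite_toSet fun S hS => ?_
        obtain ⟨j, hj, rfl⟩ := Finset.mem_image.1 (Finset.mem_coe.1 hS)
        exact (huT j.2).2.1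
      by_cases hxW : x ∈ W
      · obtain ⟨S, hSv, hxS⟩ : ∃ S ∈ (v : Set (Set X)), x ∈ S := by
          simpa [W, Set.mem_iUnion] using hxW
        obtain ⟨j, hj, rfl⟩ := Finset.mem_image.1 (Finset.mem_coe.1 hSv)
        refine Set.mem_iUnion.2 ⟨j, ?_⟩
        simp only [cov]
        rw [if_pos ((hmemv j).2 hj)]
        exact hxS
      · obtain ⟨ρ, hρ0, hball⟩ := Metric.isOpen_iff.1 hWclosed.isOpen_compl x hxW
        obtain ⟨S, hST, hxS, hdS⟩ := fine x hx (ρ / 2) (by positivity)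
        have hdSfin : EMetric.diam S ≠ ⊤ := (hdS.trans_lt ENNReal.ofReal_lt_top).ne
        have hSW : Disjoint S W := by
          refine Set.disjoint_left.2 fun y hyS hyW => ?_
          have hyb : y ∈ Metric.ball x ρ := by
            have h1 : edist y x ≤ EMetric.diam S := EMetric.edist_le_diam_of_mem hyS hxS
            have h2 : edist y x < ENNReal.ofReal ρ :=
              lt_of_le_of_lt h1 (lt_of_le_of_lt hdS
                ((ENNReal.ofReal_lt_ofReal_iff hρ0).2 (half_lt_self hρ0)))
            exact Metric.mem_ball.2 (edist_lt_ofReal.1 h2)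
          exact hball hyb hyW
        obtain ⟨b, hbu, hmeet, hdb⟩ := hVit S hST
        simp only [id] at hmeet
        have hbv : b ∉ v := by
          intro hbv
          obtain ⟨y, hyS, hyb⟩ := hmeet
          exact (Set.disjoint_left.1 hSW hyS)
            (Set.mem_biUnion (Finset.mem_coe.2 hbv) hyb)
        refine Set.mem_iUnion.2 ⟨⟨b, hbu⟩, ?_⟩
        simp only [cov]
        rw [if_neg hbv]
        obtain ⟨y, hyS, hyb⟩ := hmeet
        rw [Metric.mem_cthickening_iff]
        calc EMetric.infEdist x b ≤ edist x y := EMetric.infEdist_le_edist_of_mem hyb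
          _ ≤ EMetric.diam S := EMetric.edist_le_diam_of_mem hxS hyS
          _ = ENNReal.ofReal (EMetric.diam S).toReal := (ENNReal.ofReal_toReal hdSfin).symm
          _ ≤ ENNReal.ofReal (2 * (EMetric.diam b).toReal) := ENNReal.ofReal_le_ofReal hdb
    -- pass to an ℕ-indexed covering
    haveI : Encodable ↥u := huc.toEncodable
    set F : ℕ → Set X := fun n => (Encodable.decode₂ ↥u n).elim ∅ cov with hF
    have hFcover : A ⊆ ⋃ n, F n := by
      intro x hx
      obtain ⟨i, hi⟩ := Set.mem_iUnion.1 (hcover hx)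
      exact Set.mem_iUnion.2 ⟨Encodable.encode i,
        by simpa [F, Encodable.decode₂_encode] using hi⟩
    have hFdiam : ∀ n, EMetric.diam (F n) ≤ r := by
      intro n
      rcases h : Encodable.decode₂ ↥u n with _ | i
      · simp [F, h, EMetric.diam]
      · simpa [F, h] using hcovdiam' i
    refine le_trans (iInf_le_of_le F (iInf_le_of_le hFcover (iInf_le_of_le hFdiam le_rfl))) ?_
    -- compare the ℕ-sum with the sum over u
    have hstep : (∑' n, ⨆ _ : (F n).Nonempty, EMetric.diam (F n) ^ α)
        ≤ ∑' i : ↥u, EMetric.diam (cov i) ^ α := by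
      set g : ℕ → ℝ≥0∞ := fun n => ⨆ _ : (F n).Nonempty, EMetric.diam (F n) ^ α with hg
      have hgz : ∀ n ∉ Set.range (Encodable.encode : ↥u → ℕ), g n = 0 := by
        intro n hn
        have hdec : Encodable.decode₂ ↥u n = none := by
          by_contra h
          exact hn (Encodable.decode₂_ne_none_iff.1 h)
        simp [g, F, hdec]
      calc (∑' n, g n)
          = ∑' n, Set.indicator (Set.range (Encodable.encode : ↥u → ℕ)) g n := by
            refine tsum_congr fun n => ?_
            by_cases h : n ∈ Set.range (Encodable.encode : ↥u → ℕ)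
            · rw [Set.indicator_of_mem h]
            · rw [Set.indicator_of_notMem h, hgz n h]
        _ = ∑' (x : Set.range (Encodable.encode : ↥u → ℕ)), g x := (tsum_subtype _ g).symm
        _ = ∑' i : ↥u, g (Encodable.encode i) :=
            ((Equiv.ofInjective _ Encodable.encode_injective).tsum_eq
              (fun x : Set.range (Encodable.encode : ↥u → ℕ) => g x)).symm
        _ ≤ ∑' i : ↥u, EMetric.diam (cov i) ^ α := by
            refine ENNReal.tsum_le_tsum fun i => ?_
            have hFe : F (Encodable.encode i) = cov i := by
              simp [F, Encodable.decode₂_encode]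
            simp only [g, hFe]
            exact iSup_le fun _ => le_rfl
    refine le_trans hstep ?_
    have hper : ∀ i : ↥u, EMetric.diam (cov i) ^ α ≤ EMetric.diam (i : Set X) ^ α
        + (if i ∈ w then 0 else 5 ^ α * EMetric.diam (i : Set X) ^ α) := by
      intro i
      by_cases h : i ∈ w
      · rw [if_pos h, add_zero]
        have hcv : cov i = (i : Set X) := by
          simp [cov, (hmemv i).2 h]
        rw [hcv]
      · rw [if_neg h]
        have h1 : EMetric.diam (cov i) ^ α ≤ (5 * EMetric.diam (i : Set X)) ^ α :=
          ENNReal.rpow_le_rpow (hcovdiam i) hα.le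
        have h2 : ((5 : ℝ≥0∞) * EMetric.diam (i : Set X)) ^ α
            = 5 ^ α * EMetric.diam (i : Set X) ^ α :=
          ENNReal.mul_rpow_of_nonneg _ _ hα.le
        exact le_add_left (h1.trans h2.le)
    have htail : (∑' i : ↥u, (if i ∈ w then 0 else 5 ^ α * EMetric.diam (i : Set X) ^ α)) ≤ ε := by
      have hrw : ∀ i : ↥u, (if i ∈ w then 0 else 5 ^ α * EMetric.diam (i : Set X) ^ α)
          = 5 ^ α * Set.indicator {x : ↥u | x ∉ w}
              (fun j : ↥u => EMetric.diam (j : Set X) ^ α) i := by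
        intro i
        by_cases h : i ∈ w
        · simp [h, Set.indicator_of_notMem, Set.mem_setOf_eq]
        · rw [if_neg h, Set.indicator_of_mem (by exact h : i ∈ {x : ↥u | x ∉ w})]
      calc (∑' i : ↥u, (if i ∈ w then 0 else 5 ^ α * EMetric.diam (i : Set X) ^ α))
          = ∑' i : ↥u, 5 ^ α * Set.indicator {x : ↥u | x ∉ w}
              (fun j : ↥u => EMetric.diam (j : Set X) ^ α) i := tsum_congr hrw
        _ = 5 ^ α * ∑' i : ↥u, Set.indicator {x : ↥u | x ∉ w}
              (fun j : ↥u => EMetric.diam (j : Set X) ^ α) i := ENNReal.tsum_mul_left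
        _ = 5 ^ α * ∑' (x : {x : ↥u | x ∉ w}), EMetric.diam ((x : ↥u) : Set X) ^ α := by
            rw [← tsum_subtype {x : ↥u | x ∉ w}
              (fun j : ↥u => EMetric.diam (j : Set X) ^ α)]
        _ ≤ 5 ^ α * ε₂ := by
            refine mul_le_mul_right ?_ _
            exact le_of_lt (by exact hw)
        _ = ε := by
            rw [hε₂def, ENNReal.mul_div_cancel' (fun h => absurd h h5α0) (fun h => absurd h h5αtop)]
    calc (∑' i : ↥u, EMetric.diam (cov i) ^ α)
        ≤ ∑' i : ↥u, (EMetric.diam (i : Set X) ^ α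
            + (if i ∈ w then 0 else 5 ^ α * EMetric.diam (i : Set X) ^ α)) :=
          ENNReal.tsum_le_tsum hper
      _ = (∑' i : ↥u, EMetric.diam (i : Set X) ^ α)
            + ∑' i : ↥u, (if i ∈ w then 0 else 5 ^ α * EMetric.diam (i : Set X) ^ α) :=
          ENNReal.tsum_add
      _ ≤ t0⁻¹ * (μH[α] A + ε) + ε := add_le_add hsum2 htail
  -- conclude
  have h1 : μH[α] A ≤ t0⁻¹ * μH[α] A := by
    refine ENNReal.le_of_forall_pos_le_add fun η hη hb => ?_
    have hη2 : (0 : ℝ≥0∞) < (η : ℝ≥0∞) / 2 :=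
      ENNReal.div_pos (by exact_mod_cast hη.ne') ENNReal.ofNat_ne_top
    have hη2top : ((η : ℝ≥0∞) / 2) ≠ ⊤ :=
      ne_top_of_le_ne_top ENNReal.coe_ne_top ENNReal.half_le_self
    calc μH[α] A ≤ t0⁻¹ * (μH[α] A + (η : ℝ≥0∞) / 2) + (η : ℝ≥0∞) / 2 :=
          main _ hη2 hη2top
      _ = t0⁻¹ * μH[α] A + t0⁻¹ * ((η : ℝ≥0∞) / 2) + (η : ℝ≥0∞) / 2 := by rw [mul_add]
      _ ≤ t0⁻¹ * μH[α] A + 1 * ((η : ℝ≥0∞) / 2) + (η : ℝ≥0∞) / 2 := by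
          gcongr
          exact ENNReal.inv_le_one.2 ht1.le
      _ = t0⁻¹ * μH[α] A + (η : ℝ≥0∞) := by rw [one_mul, add_assoc, ENNReal.add_halves]
  by_contra hne0
  have hlt : t0⁻¹ * μH[α] A < 1 * μH[α] A :=
    ENNReal.mul_lt_mul_left hne0 hmfin.ne (ENNReal.inv_lt_one.2 ht1)
  rw [one_mul] at hlt
  exact absurd h1 (not_le.2 hlt)

/-- **Federer density estimate.** Let `X` be a metric space, `α > 0`,
and `E ⊆ X` a Borel set with `0 < ℋᵅ(E) < ∞`. Then for `ℋᵅ`-a.e. `x ∈ E`: for every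
`ε > 0` there is `δ > 0` such that every set `S ∋ x` with `diam S < δ` satisfies
`ℋᵅ(E ∩ S) ≤ (1 + ε) (diam S)ᵅ`. -/
theorem statement_5 (X : Type*) [MetricSpace X] [MeasurableSpace X] [BorelSpace X]
    (α : ℝ) (hα : 0 < α) (E : Set X) (hE : MeasurableSet E)
    (h0 : 0 < μH[α] E) (hfin : μH[α] E < ⊤) :
    ∀ᵐ x ∂((μH[α] : Measure X).restrict E),
      ∀ ε : ℝ, 0 < ε → ∃ δ : ℝ, 0 < δ ∧
        ∀ S : Set X, x ∈ S → EMetric.diam S < ENNReal.ofReal δ →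
          μH[α] (E ∩ S) ≤ ENNReal.ofReal (1 + ε) * EMetric.diam S ^ α := by
  have hnull : ∀ n : ℕ, μH[α] {x | x ∈ E ∧ ∀ δ : ℝ, 0 < δ → ∃ S : Set X, x ∈ S ∧
      EMetric.diam S < ENNReal.ofReal δ ∧
      ENNReal.ofReal (1 + 1 / (n + 1)) * EMetric.diam S ^ α < μH[α] (E ∩ S)} = 0 := by
    intro n
    refine federer_key hα hE hfin ?_ ENNReal.ofReal_ne_top
    have hpos : (0 : ℝ) < 1 / ((n : ℝ) + 1) := by positivity
    rw [show (1 : ℝ≥0∞) = ENNReal.ofReal 1 by simp]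
    exact (ENNReal.ofReal_lt_ofReal_iff (by linarith)).2 (by linarith)
  rw [ae_iff, Measure.restrict_apply' hE]
  refine measure_mono_null (fun x hx => ?_) (measure_iUnion_null hnull)
  obtain ⟨hnp, hxE⟩ := hx
  simp only [Set.mem_setOf_eq] at hnp
  push_neg at hnp
  obtain ⟨ε, hε, hbad⟩ := hnp
  obtain ⟨n, hn⟩ := exists_nat_one_div_lt hε
  refine Set.mem_iUnion.2 ⟨n, hxE, fun δ hδ => ?_⟩
  obtain ⟨S, hxS, hdS, hlt⟩ := hbad δ hδ
  refine ⟨S, hxS, hdS, lt_of_le_of_lt ?_ hlt⟩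
  exact mul_le_mul_left (ENNReal.ofReal_le_ofReal (by linarith)) _
end

section
/- Let N : ℝ² × ℝ → ℝ be a continuous function such that N(p) ≥ 0 for all p, N(p*q) ≤ N(p) + N(q) for all p,q (where * is the Heisenberg product), and N(λx₁, λ²x₂) = λ·N(x₁,x₂) for all λ > 0 and (x₁,x₂) ∈ ℝ² × ℝ. Then: (a) N((x₁,0)) ≤ N((x₁,x₂)) for every (x₁,x₂) ∈ ℝ² × ℝ; (b) the function x₁ ↦ N((x₁,0)) on ℝ² is subadditive, i.e., N((x₁+y₁,0)) ≤ N((x₁,0)) + N((y₁,0)) for all x₁, y₁ ∈ ℝ². -/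
/-- The standard symplectic form `ω((a,b),(c,d)) = ad - bc` on `ℝ²`. -/
noncomputable def heisOmega (a b : ℝ × ℝ) : ℝ := a.1 * b.2 - a.2 * b.1

/-- The group product of the first Heisenberg group `ℝ² × ℝ`. -/
noncomputable def heisMul (p q : (ℝ × ℝ) × ℝ) : (ℝ × ℝ) × ℝ :=
  (p.1 + q.1, p.2 + q.2 + 2 * heisOmega p.1 q.1)

lemma heis_iter (N : (ℝ × ℝ) × ℝ → ℝ)
    (hsub : ∀ p q, N (heisMul p q) ≤ N p + N q) :
    ∀ (k : ℕ) (x₁ : ℝ × ℝ) (x₂ : ℝ),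
      N (((k : ℝ) + 1) • x₁, ((k : ℝ) + 1) * x₂) ≤ ((k : ℝ) + 1) * N (x₁, x₂) := by
  intro k
  induction k with
  | zero => intro x₁ x₂; simp
  | succ k ih =>
      intro x₁ x₂
      have key : ((((k : ℕ) + 1 : ℕ) : ℝ) + 1) • x₁ = ((k : ℝ) + 1) • x₁ + x₁ ∧
          ((((k : ℕ) + 1 : ℕ) : ℝ) + 1) * x₂ =
            ((k : ℝ) + 1) * x₂ + x₂ + 2 * heisOmega (((k : ℝ) + 1) • x₁) x₁ := by
        constructor
        · push_cast
          ext <;> simp [Prod.smul_fst, Prod.smul_snd, smul_eq_mul] <;> ring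
        · simp only [heisOmega, Prod.smul_fst, Prod.smul_snd, smul_eq_mul]
          push_cast; ring
      have := hsub (((k : ℝ) + 1) • x₁, ((k : ℝ) + 1) * x₂) (x₁, x₂)
      simp only [heisMul] at this
      rw [key.1, key.2]
      calc N (((k : ℝ) + 1) • x₁ + x₁,
            ((k : ℝ) + 1) * x₂ + x₂ + 2 * heisOmega (((k : ℝ) + 1) • x₁) x₁)
          ≤ N (((k : ℝ) + 1) • x₁, ((k : ℝ) + 1) * x₂) + N (x₁, x₂) := this
        _ ≤ ((k : ℝ) + 1) * N (x₁, x₂) + N (x₁, x₂) := by linarith [ih x₁ x₂]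
        _ = ((((k : ℕ) + 1 : ℕ) : ℝ) + 1) * N (x₁, x₂) := by push_cast; ring

/-- Let `N : ℝ² × ℝ → ℝ` be continuous, nonnegative, subadditive for
the Heisenberg product and homogeneous for the Heisenberg dilations. Then
(a) `N(x₁, 0) ≤ N(x₁, x₂)` for every `(x₁, x₂)` (the first-layer projection is
1-Lipschitz), and (b) `x₁ ↦ N(x₁, 0)` is subadditive on `ℝ²`. -/
theorem statement_6 (N : (ℝ × ℝ) × ℝ → ℝ)
    (hcont : Continuous N)
    (hnonneg : ∀ p, 0 ≤ N p)
    (hsub : ∀ p q, N (heisMul p q) ≤ N p + N q)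
    (hhom : ∀ c : ℝ, 0 < c → ∀ x₁ : ℝ × ℝ, ∀ x₂ : ℝ,
      N (c • x₁, c ^ 2 * x₂) = c * N (x₁, x₂)) :
    (∀ x : (ℝ × ℝ) × ℝ, N (x.1, 0) ≤ N x) ∧
    (∀ x₁ y₁ : ℝ × ℝ, N (x₁ + y₁, 0) ≤ N (x₁, 0) + N (y₁, 0)) := by
  have parta : ∀ x : (ℝ × ℝ) × ℝ, N (x.1, 0) ≤ N x := by
    intro x
    obtain ⟨x₁, x₂⟩ := x
    have hbound : ∀ n : ℕ, N (x₁, x₂ * (1 / ((n : ℝ) + 1))) ≤ N (x₁, x₂) := by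
      intro n
      have hc : (0 : ℝ) < 1 / ((n : ℝ) + 1) := by positivity
      have key := heis_iter N hsub n ((1 / ((n : ℝ) + 1)) • x₁)
        ((1 / ((n : ℝ) + 1)) ^ 2 * x₂)
      have h1 : ((n : ℝ) + 1) • ((1 / ((n : ℝ) + 1)) • x₁) = x₁ := by
        rw [smul_smul]
        have : ((n : ℝ) + 1) * (1 / ((n : ℝ) + 1)) = 1 := by
          field_simp
        rw [this, one_smul]
      have h2 : ((n : ℝ) + 1) * ((1 / ((n : ℝ) + 1)) ^ 2 * x₂)
          = x₂ * (1 / ((n : ℝ) + 1)) := by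
        field_simp
      rw [h1, h2, hhom _ hc] at key
      calc N (x₁, x₂ * (1 / ((n : ℝ) + 1)))
          ≤ ((n : ℝ) + 1) * (1 / ((n : ℝ) + 1) * N (x₁, x₂)) := key
        _ = N (x₁, x₂) := by field_simp
    have htend : Filter.Tendsto (fun n : ℕ => N (x₁, x₂ * (1 / ((n : ℝ) + 1))))
        Filter.atTop (nhds (N (x₁, 0))) := by
      have h0 : Filter.Tendsto (fun n : ℕ => ((x₁, x₂ * (1 / ((n : ℝ) + 1))) : (ℝ × ℝ) × ℝ))
          Filter.atTop (nhds (x₁, 0)) := by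
        apply Filter.Tendsto.prodMk_nhds tendsto_const_nhds
        have : Filter.Tendsto (fun n : ℕ => 1 / ((n : ℝ) + 1)) Filter.atTop (nhds 0) :=
          tendsto_one_div_add_atTop_nhds_zero_nat
        have := (this.const_mul x₂)
        simpa using this
      exact (hcont.tendsto _).comp h0
    exact le_of_tendsto htend (Filter.Eventually.of_forall hbound)
  refine ⟨parta, ?_⟩
  intro x₁ y₁
  have h := hsub (x₁, 0) (y₁, 0)
  simp only [heisMul] at h
  calc N (x₁ + y₁, 0) ≤ N (x₁ + y₁, 0 + 0 + 2 * heisOmega x₁ y₁) :=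
        parta (x₁ + y₁, 0 + 0 + 2 * heisOmega x₁ y₁)
    _ ≤ N (x₁, 0) + N (y₁, 0) := h
end

section
/- Suppose ℝ carries a metric space structure whose distance is the snowflake distance d(s,t) = |t−s|^{1/2}. Then for every α > 0 there is no set E ⊆ ℝ with 0 < H^α_d(E) < ∞ such that Θ^α_d(E,x) = 1 for H^α_d-almost every x ∈ E. -/
open MeasureTheory Filter
open scoped ENNReal NNReal

/-- The snowflaked real line as a bare type. -/
def Snow : Type := ℝ

/-- The underlying real number of a point of `Snow`. -/
noncomputable def Snow.val (s : Snow) : ℝ := s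

/-- The distance function of a metric-space structure on `Snow`. -/
noncomputable def Snow.dist' (m : MetricSpace Snow) (p q : Snow) : ℝ :=
  letI := m; dist p q

/-- The Borel σ-algebra of a metric-space structure on `Snow`. -/
noncomputable def Snow.borelMS (m : MetricSpace Snow) : MeasurableSpace Snow :=
  letI := m; borel Snow

/-- The `α`-dimensional Hausdorff measure for a metric-space structure on `Snow`. -/
noncomputable def Snow.hausdorff (m : MetricSpace Snow) (α : ℝ) :
    @Measure Snow (Snow.borelMS m) :=
  letI := m
  letI : MeasurableSpace Snow := Snow.borelMS m
  haveI : BorelSpace Snow := ⟨rfl⟩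
  μH[α]

/-- Closed ball for a metric-space structure on `Snow`. -/
def Snow.cball (m : MetricSpace Snow) (x : Snow) (r : ℝ) : Set Snow :=
  letI := m; Metric.closedBall x r


section Aux

open Set Metric Topology

lemma core_lemma {s : ℝ} (hs : 0 < s) {C : ℝ≥0∞} (hC1 : 1 < C) (hCtop : C ≠ ∞)
    (E : Set ℝ) (h0 : μH[s] E ≠ 0) (hfin : μH[s] E ≠ ∞)
    (hae : μH[s] (E ∩ {x : ℝ | ∃ r₀ > 0, ∀ ρ ∈ Set.Ioc (0:ℝ) r₀,
        C * ENNReal.ofReal (2*ρ) ^ s ≤ μH[s] (E ∩ Metric.closedBall x ρ)}ᶜ) = 0) :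
    False := by
  have hC0 : C ≠ 0 := (zero_lt_one.trans hC1).ne'
  set μ : Measure ℝ := μH[s] with hμdef
  set T : Set ℝ := {x : ℝ | ∃ r₀ > 0, ∀ ρ ∈ Set.Ioc (0:ℝ) r₀,
      C * ENNReal.ofReal (2*ρ) ^ s ≤ μ (E ∩ Metric.closedBall x ρ)} with hTdef
  set E' : Set ℝ := toMeasurable μ E with hE'def
  have hE'm : MeasurableSet E' := measurableSet_toMeasurable μ E
  have hE'c : μ E' = μ E := measure_toMeasurable E
  have hfin' : μ E' ≠ ∞ := by rw [hE'c]; exact hfin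
  have hEE' : E ⊆ E' := subset_toMeasurable μ E
  have hinter : ∀ B : Set ℝ, MeasurableSet B → μ (E' ∩ B) = μ (E ∩ B) := fun B hB =>
    Measure.measure_toMeasurable_inter hB hfin
  set ν : Measure ℝ := μ.restrict E' with hνdef
  haveI : IsFiniteMeasure ν := ⟨by
    rw [hνdef, Measure.restrict_apply_univ]; exact hfin'.lt_top⟩
  have hν : ∀ B : Set ℝ, MeasurableSet B → ν B = μ (E ∩ B) := by
    intro B hB
    rw [hνdef, Measure.restrict_apply hB, Set.inter_comm, hinter B hB]
  -- the set of good points has positive measure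
  have h1 : μ (E ∩ T) ≠ 0 := by
    intro hz
    apply h0
    have : μ E ≤ μ (E ∩ T) + μ (E ∩ Tᶜ) := by
      conv_lhs => rw [← Set.inter_union_compl E T]
      exact measure_union_le _ _
    rw [hz, hae, add_zero] at this
    exact le_antisymm this zero_le
  -- countable exhaustion by uniform thresholds
  set A : ℕ → Set ℝ := fun n => E' ∩ {x : ℝ | ∀ ρ ∈ Set.Ioc (0:ℝ) (1/(n+1)),
      C * ENNReal.ofReal (2*ρ) ^ s ≤ μ (E ∩ Metric.closedBall x ρ)} with hAdef
  have hcover : E ∩ T ⊆ ⋃ n, A n := by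
    rintro x ⟨hxE, r₀, hr₀, hx⟩
    obtain ⟨n, hn⟩ := exists_nat_one_div_lt hr₀
    exact Set.mem_iUnion.2 ⟨n, hEE' hxE, fun ρ hρ =>
      hx ρ ⟨hρ.1, hρ.2.trans hn.le⟩⟩
  obtain ⟨n, hn⟩ : ∃ n, μ (A n) ≠ 0 := by
    by_contra h
    push_neg at h
    apply h1
    refine le_antisymm (le_trans (measure_mono hcover) ?_) zero_le
    calc μ (⋃ n, A n) ≤ ∑' n, μ (A n) := measure_iUnion_le _
    _ = 0 := by simp [h]
  set δ : ℝ := 1/(n+1) with hδdef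
  have hδpos : 0 < δ := by positivity
  have hAE' : A n ⊆ E' := Set.inter_subset_left
  have hAfin : μ (A n) ≠ ∞ := fun h =>
    hfin' (le_antisymm le_top (h ▸ measure_mono hAE'))
  have hνA : ν (A n) = μ (A n) := by
    rw [hνdef, Measure.restrict_apply' hE'm,
      Set.inter_eq_self_of_subset_left hAE']
  have hAball : ∀ x ∈ A n, ∀ ρ ∈ Set.Ioc (0:ℝ) δ,
      C * ENNReal.ofReal (2*ρ) ^ s ≤ ν (Metric.closedBall x ρ) := by
    intro x hx ρ hρ
    rw [hν _ measurableSet_closedBall]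
    exact hx.2 ρ hρ
  -- choose an open superset with measure < C * ν (A n)
  have hlt : ν (A n) < C * ν (A n) := by
    rw [hνA]
    conv_lhs => rw [← one_mul (μ (A n))]
    rw [mul_comm 1, mul_comm C]; exact ENNReal.mul_lt_mul_right hn hAfin hC1
  obtain ⟨U, hAU, hUopen, hU⟩ := Set.exists_isOpen_lt_of_lt (μ := ν) (A n) _ hlt
  -- radii for which the closed ball is inside U
  have hUr : ∀ x : ℝ, ∃ ρ : ℝ, x ∈ A n → (0 < ρ ∧ Metric.closedBall x ρ ⊆ U) := by
    intro x
    by_cases hx : x ∈ A n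
    · obtain ⟨ε, hε, hball⟩ := Metric.isOpen_iff.1 hUopen x (hAU hx)
      exact ⟨ε/2, fun _ => ⟨by linarith,
        (Metric.closedBall_subset_ball (by linarith)).trans hball⟩⟩
    · exact ⟨1, fun h => absurd h hx⟩
  choose rU hrU using hUr
  set R : ℕ → ℝ → ℝ := fun k x => min (min δ ((1/2:ℝ)^k)) (rU x) with hRdef
  have hRpos : ∀ k, ∀ x ∈ A n, 0 < R k x := fun k x hx =>
    lt_min (lt_min hδpos (by positivity)) (hrU x hx).1
  -- Besicovitch covering for each scale k
  have main : ∀ k : ℕ, ∃ (t : Set ℝ) (rad : ℝ → ℝ), t.Countable ∧ t ⊆ A n ∧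
      (∀ x ∈ t, rad x ∈ Set.Ioi (0:ℝ) ∩ Set.Ioo 0 (R k x)) ∧
      ν (A n \ ⋃ x ∈ t, Metric.closedBall x (rad x)) = 0 ∧
      t.PairwiseDisjoint (fun x => Metric.closedBall x (rad x)) := by
    intro k
    exact Besicovitch.exists_disjoint_closedBall_covering_ae ν (fun _ => Set.Ioi 0) (A n)
      (fun x _ δ' hδ' => ⟨δ'/2, Set.mem_inter (by simp; linarith) ⟨by linarith, by linarith⟩⟩)
      (R k) (hRpos k)
  choose t rad t_count t_sub t_mem t_null t_disj using main

  -- the leftover null sets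
  have hpieceμ : ∀ k, μ (A n \ ⋃ x ∈ t k, Metric.closedBall x (rad k x)) = 0 := by
    intro k
    have hsub : (A n \ ⋃ x ∈ t k, Metric.closedBall x (rad k x)) ⊆ E' :=
      (Set.diff_subset).trans hAE'
    have : μ (A n \ ⋃ x ∈ t k, Metric.closedBall x (rad k x)) =
        ν (A n \ ⋃ x ∈ t k, Metric.closedBall x (rad k x)) := by
      rw [hνdef, Measure.restrict_apply' hE'm, Set.inter_eq_self_of_subset_left hsub]
    rw [this, t_null k]
  set N : Set ℝ := ⋃ k, (A n \ ⋃ x ∈ t k, Metric.closedBall x (rad k x)) with hNdef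
  have hμN : μ N = 0 := by
    refine le_antisymm (le_trans (measure_iUnion_le _) ?_) zero_le
    simp [hpieceμ]
  set A' : Set ℝ := A n \ N with hA'def
  have hμA' : μ (A n) ≤ μ A' := by
    have : A n ⊆ A' ∪ N := fun x hx => by
      by_cases hxN : x ∈ N
      · exact Or.inr hxN
      · exact Or.inl ⟨hx, hxN⟩
    calc μ (A n) ≤ μ (A' ∪ N) := measure_mono this
    _ ≤ μ A' + μ N := measure_union_le _ _
    _ = μ A' := by rw [hμN, add_zero]
  have hcov : ∀ k, A' ⊆ ⋃ x ∈ t k, Metric.closedBall x (rad k x) := by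
    intro k x hx
    by_contra hxB
    exact hx.2 (Set.mem_iUnion.2 ⟨k, hx.1, hxB⟩)
  -- radius facts
  have hrad_pos : ∀ k, ∀ x ∈ t k, 0 < rad k x := fun k x hx => (t_mem k x hx).2.1
  have hrad_le : ∀ k, ∀ x ∈ t k, rad k x ≤ (1/2:ℝ)^k := fun k x hx =>
    (t_mem k x hx).2.2.le.trans ((min_le_left _ _).trans (min_le_right _ _))
  have hrad_δ : ∀ k, ∀ x ∈ t k, rad k x ∈ Set.Ioc (0:ℝ) δ := fun k x hx =>
    ⟨(t_mem k x hx).2.1, (t_mem k x hx).2.2.le.trans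
      ((min_le_left _ _).trans (min_le_left _ _))⟩
  have hball_U : ∀ k, ∀ x ∈ t k, Metric.closedBall x (rad k x) ⊆ U := fun k x hx =>
    (Metric.closedBall_subset_closedBall ((t_mem k x hx).2.2.le.trans
      (min_le_right _ _))).trans (hrU x (t_sub k hx)).2
  have hdiam : ∀ k, ∀ x ∈ t k,
      EMetric.diam (Metric.closedBall x (rad k x)) ≤ ENNReal.ofReal (2 * rad k x) := by
    intro k x hx
    rw [← Metric.emetric_closedBall (hrad_pos k x hx).le]
    calc EMetric.diam (EMetric.closedBall x (ENNReal.ofReal (rad k x)))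
        ≤ 2 * ENNReal.ofReal (rad k x) := EMetric.diam_closedBall
    _ = ENNReal.ofReal (2 * rad k x) := by
        rw [ENNReal.ofReal_mul (by norm_num : (0:ℝ) ≤ 2)]
        norm_num
  -- Hausdorff measure bound via the coverings
  haveI : ∀ k, Countable (t k) := fun k => (t_count k).to_subtype
  have hliminf : μ A' ≤ liminf
      (fun k => ∑' p : t k, EMetric.diam (Metric.closedBall (p : ℝ) (rad k p)) ^ s) atTop := by
    rw [hμdef]
    refine Measure.hausdorffMeasure_le_liminf_tsum s A'
      (fun k => ENNReal.ofReal (2 * (1/2:ℝ)^k)) ?_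
      (fun k (p : t k) => Metric.closedBall (p : ℝ) (rad k p)) ?_ ?_
    · have : Tendsto (fun k : ℕ => 2 * (1/2:ℝ)^k) atTop (𝓝 (2 * 0)) :=
        (tendsto_pow_atTop_nhds_zero_of_lt_one (by norm_num) (by norm_num)).const_mul 2
      rw [mul_zero] at this
      have := ENNReal.tendsto_ofReal this
      rwa [ENNReal.ofReal_zero] at this
    · refine Eventually.of_forall fun k => fun p => ?_
      refine (hdiam k p p.2).trans (ENNReal.ofReal_le_ofReal ?_)
      have := hrad_le k p p.2
      nlinarith [hrad_pos k p p.2]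
    · refine Eventually.of_forall fun k => ?_
      intro x hx
      obtain ⟨y, hy, hxy⟩ := Set.mem_iUnion₂.1 (hcov k hx)
      exact Set.mem_iUnion.2 ⟨⟨y, hy⟩, hxy⟩
  -- bound each sum
  have hsum : ∀ k, (∑' p : t k,
      EMetric.diam (Metric.closedBall (p : ℝ) (rad k p)) ^ s) ≤ ν U / C := by
    intro k
    have h1 : ∀ p : t k,
        EMetric.diam (Metric.closedBall (p : ℝ) (rad k p)) ^ s
          ≤ ν (Metric.closedBall (p : ℝ) (rad k p)) / C := by
      intro p
      rw [ENNReal.le_div_iff_mul_le (Or.inl hC0) (Or.inl hCtop)]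
      rw [mul_comm]
      calc C * EMetric.diam (Metric.closedBall (p : ℝ) (rad k p)) ^ s
          ≤ C * ENNReal.ofReal (2 * rad k p) ^ s := by
            gcongr
            exact hdiam k p p.2
      _ ≤ ν (Metric.closedBall (p : ℝ) (rad k p)) :=
          hAball (p : ℝ) (t_sub k p.2) (rad k p) (hrad_δ k p p.2)
    calc (∑' p : t k, EMetric.diam (Metric.closedBall (p : ℝ) (rad k p)) ^ s)
        ≤ ∑' p : t k, ν (Metric.closedBall (p : ℝ) (rad k p)) / C :=
          ENNReal.tsum_le_tsum h1
    _ = (∑' p : t k, ν (Metric.closedBall (p : ℝ) (rad k p))) / C := by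
        simp only [div_eq_mul_inv, ENNReal.tsum_mul_right]
    _ = ν (⋃ x ∈ t k, Metric.closedBall x (rad k x)) / C := by
        rw [measure_biUnion (t_count k) (t_disj k) (fun _ _ => measurableSet_closedBall)]
    _ ≤ ν U / C := by
        gcongr
        exact Set.iUnion₂_subset (hball_U k)
  have hfinal : μ (A n) ≤ ν U / C := by
    refine hμA'.trans (hliminf.trans ?_)
    calc liminf (fun k => ∑' p : t k,
          EMetric.diam (Metric.closedBall (p : ℝ) (rad k p)) ^ s) atTop
        ≤ liminf (fun _ : ℕ => ν U / C) atTop :=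
          liminf_le_liminf (Eventually.of_forall hsum)
    _ = ν U / C := liminf_const _
  have hcontr : ν U / C < μ (A n) := by
    rw [ENNReal.div_lt_iff (Or.inl hC0) (Or.inl hCtop)]
    calc ν U < C * ν (A n) := hU
    _ = μ (A n) * C := by rw [hνA, mul_comm]
  exact absurd (hfinal.trans_lt hcontr) (lt_irrefl _)

/-- If `ℝ` is endowed with the snowflake distance
`d(s,t) = √|t - s|`, then for every `α > 0` there is no set `E` with
`0 < ℋᵅ(E) < ∞` whose `α`-density equals `1` at `ℋᵅ`-a.e. point of `E`. -/
theorem statement_7 (m : MetricSpace Snow)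
    (hd : ∀ s t : Snow, Snow.dist' m s t = Real.sqrt |t.val - s.val|) :
    ∀ α : ℝ, 0 < α →
      ¬ ∃ E : Set Snow,
          0 < Snow.hausdorff m α E ∧ Snow.hausdorff m α E < ⊤ ∧
          (∀ᵐ x ∂((Snow.hausdorff m α).restrict E),
            Tendsto
              (fun r : ℝ =>
                Snow.hausdorff m α (E ∩ Snow.cball m x r) / ENNReal.ofReal (2 * r) ^ α)
              (nhdsWithin 0 (Set.Ioi 0)) (nhds 1)) := by
  intro α hα
  rintro ⟨E, hE0, hEfin, hae⟩
  letI := m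
  letI : MeasurableSpace Snow := Snow.borelMS m
  haveI : BorelSpace Snow := ⟨rfl⟩
  set s : ℝ := α / 2 with hsdef
  have hs : 0 < s := by positivity
  have hdist : ∀ p q : Snow, dist p q = Real.sqrt |q.val - p.val| := fun p q => hd p q
  set g : ℝ → Snow := fun x => x with hgdef
  have hH1 : ∀ S : Set Snow, HolderOnWith 1 2 Snow.val S := by
    intro S p _ q _
    rw [show (((2:ℝ≥0)):ℝ) = (2:ℝ) by norm_num, edist_dist, edist_dist, hdist p q,
      ENNReal.ofReal_rpow_of_nonneg (Real.sqrt_nonneg _) (by norm_num : (0:ℝ) ≤ 2),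
      ENNReal.coe_one, one_mul]
    apply le_of_eq
    congr 1
    rw [Real.dist_eq, abs_sub_comm,
      show (2:ℝ) = ((2:ℕ):ℝ) by norm_num, Real.rpow_natCast,
      Real.sq_sqrt (abs_nonneg _)]
  have hH2 : ∀ S : Set ℝ, HolderOnWith 1 (1/2) g S := by
    intro S p _ q _
    rw [show (((1/2:ℝ≥0)):ℝ) = (1/2:ℝ) by norm_num]
    rw [edist_dist, edist_dist, hdist (g p) (g q),
      show Snow.val (g q) = q from rfl, show Snow.val (g p) = p from rfl,
      ENNReal.coe_one, one_mul, Real.dist_eq, abs_sub_comm p q, Real.sqrt_eq_rpow,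
      ENNReal.ofReal_rpow_of_nonneg (abs_nonneg _) (by norm_num : (0:ℝ) ≤ 1/2)]
  have htrans : ∀ S : Set Snow, Snow.hausdorff m α S = μH[s] (Snow.val '' S) := by
    have hμeq : Snow.hausdorff m α = (μH[α] : Measure Snow) := rfl
    intro S
    rw [hμeq]
    apply le_antisymm
    · have h2 := (hH2 (Snow.val '' S)).hausdorffMeasure_image_le (by norm_num) hα.le
      have himg : g '' (Snow.val '' S) = S := by
        rw [Set.image_image]
        exact Set.image_id' S
      have hexp : (((1:ℝ≥0)/2:ℝ≥0):ℝ) * α = s := by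
        rw [hsdef]; push_cast; ring
      rw [himg, hexp, ENNReal.coe_one, ENNReal.one_rpow, one_mul] at h2
      exact h2
    · have h1 := (hH1 S).hausdorffMeasure_image_le (by norm_num) hs.le
      have hexp : (((2:ℝ≥0)):ℝ) * s = α := by
        rw [hsdef]; push_cast; ring
      rw [hexp, ENNReal.coe_one, ENNReal.one_rpow, one_mul] at h1
      exact h1
  -- closed balls are euclidean intervals
  have hball : ∀ (x : Snow) (r : ℝ), 0 < r →
      Snow.val '' (Snow.cball m x r) = Metric.closedBall (Snow.val x) (r^2) := by
    intro x r hr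
    ext y
    constructor
    · rintro ⟨z, hz, rfl⟩
      have hz' : dist z x ≤ r := hz
      rw [hdist z x] at hz'
      rw [Metric.mem_closedBall, Real.dist_eq]
      have h1 : |Snow.val x - Snow.val z| ≤ r^2 := by
        have := Real.sq_sqrt (abs_nonneg (Snow.val x - Snow.val z))
        nlinarith [Real.sqrt_nonneg |Snow.val x - Snow.val z|]
      rwa [abs_sub_comm]
    · intro hy
      refine ⟨g y, ?_, rfl⟩
      have hy' : |y - Snow.val x| ≤ r^2 := by
        rw [Metric.mem_closedBall, Real.dist_eq] at hy
        exact hy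
      show g y ∈ Metric.closedBall x r
      rw [Metric.mem_closedBall, hdist (g y) x]
      have heq : |Snow.val x - Snow.val (g y)| = |y - Snow.val x| := by
        rw [abs_sub_comm]; rfl
      rw [heq]
      calc Real.sqrt |y - Snow.val x| ≤ Real.sqrt (r^2) := Real.sqrt_le_sqrt hy'
      _ = r := Real.sqrt_sq hr.le
  have hval_inj : Function.Injective Snow.val := fun a b h => h
  -- the constant
  set c : ℝ := ((2:ℝ) ^ (-s) + 1)/2 with hcdef
  have h2s : (0:ℝ) < (2:ℝ)^(-s) := Real.rpow_pos_of_pos two_pos _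
  have h2s1 : (2:ℝ)^(-s) < 1 := Real.rpow_lt_one_of_one_lt_of_neg one_lt_two (by linarith)
  have hc0 : 0 < c := by rw [hcdef]; linarith
  have hc1 : c < 1 := by rw [hcdef]; linarith
  set Cval : ℝ≥0∞ := ENNReal.ofReal c * (2:ℝ≥0∞) ^ s with hCdef
  have h2e : ((2:ℝ≥0∞)) ^ s = ENNReal.ofReal ((2:ℝ) ^ s) := by
    rw [show ((2:ℝ≥0∞)) = ENNReal.ofReal (2:ℝ) by norm_num,
      ENNReal.ofReal_rpow_of_pos two_pos]
  have hCreal : Cval = ENNReal.ofReal (c * (2:ℝ)^s) := by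
    rw [hCdef, h2e, ← ENNReal.ofReal_mul hc0.le]
  have hC1 : 1 < Cval := by
    rw [hCreal, show (1:ℝ≥0∞) = ENNReal.ofReal 1 by simp,
      ENNReal.ofReal_lt_ofReal_iff (by positivity)]
    have h1 : (2:ℝ)^(-s) * (2:ℝ)^s = 1 := by
      rw [← Real.rpow_add two_pos]; simp
    have h2 : (0:ℝ) < (2:ℝ)^s := Real.rpow_pos_of_pos two_pos _
    nlinarith
  have hCtop : Cval ≠ ∞ := by rw [hCreal]; exact ENNReal.ofReal_ne_top
  -- the euclidean image of `E`
  set E₀ : Set ℝ := Snow.val '' E with hE₀def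
  have hE0' : μH[s] E₀ ≠ 0 := by rw [← htrans E]; exact hE0.ne'
  have hEfin' : μH[s] E₀ ≠ ∞ := by rw [← htrans E]; exact hEfin.ne
  have hEball : ∀ (x : Snow) (r : ℝ), 0 < r →
      Snow.hausdorff m α (E ∩ Snow.cball m x r)
        = μH[s] (E₀ ∩ Metric.closedBall (Snow.val x) (r^2)) := by
    intro x r hr
    rw [htrans, Set.image_inter hval_inj, hball x r hr]
  -- pointwise translation of the density condition
  have hpt : ∀ x : Snow,
      Tendsto (fun r : ℝ => Snow.hausdorff m α (E ∩ Snow.cball m x r)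
          / ENNReal.ofReal (2 * r) ^ α) (𝓝[>] (0:ℝ)) (𝓝 1) →
      ∃ r₀ > 0, ∀ ρ ∈ Set.Ioc (0:ℝ) r₀,
        Cval * ENNReal.ofReal (2*ρ) ^ s ≤ μH[s] (E₀ ∩ Metric.closedBall (Snow.val x) ρ) := by
    intro x hx
    have hev := hx.eventually (eventually_gt_nhds
      (show ENNReal.ofReal c < 1 from ENNReal.ofReal_lt_one.2 hc1))
    obtain ⟨r₀, hr₀, hsub⟩ := mem_nhdsGT_iff_exists_Ioc_subset.1 hev
    refine ⟨r₀^2, pow_pos hr₀ 2, ?_⟩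
    rintro ρ ⟨hρ0, hρle⟩
    set r : ℝ := Real.sqrt ρ with hrdef
    have hrpos : 0 < r := Real.sqrt_pos.2 hρ0
    have hrle : r ≤ r₀ := by
      calc r ≤ Real.sqrt (r₀^2) := Real.sqrt_le_sqrt hρle
      _ = r₀ := Real.sqrt_sq (le_of_lt hr₀)
    have hkey : ENNReal.ofReal c < Snow.hausdorff m α (E ∩ Snow.cball m x r)
        / ENNReal.ofReal (2 * r) ^ α := hsub ⟨hrpos, hrle⟩
    rw [hEball x r hrpos, Real.sq_sqrt hρ0.le] at hkey
    have hbpos : (0:ℝ≥0∞) < ENNReal.ofReal (2*r) := ENNReal.ofReal_pos.2 (by linarith)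
    have hb0 : (ENNReal.ofReal (2*r)) ^ α ≠ 0 := (ENNReal.rpow_pos hbpos ENNReal.ofReal_ne_top).ne'
    have hbt : (ENNReal.ofReal (2*r)) ^ α ≠ ∞ :=
      ENNReal.rpow_ne_top_of_nonneg hα.le ENNReal.ofReal_ne_top
    have hmul : ENNReal.ofReal c * ENNReal.ofReal (2*r) ^ α
        ≤ μH[s] (E₀ ∩ Metric.closedBall (Snow.val x) ρ) :=
      (ENNReal.le_div_iff_mul_le (Or.inl hb0) (Or.inl hbt)).1 hkey.le
    refine le_trans (le_of_eq ?_) hmul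
    -- Cval * ofReal (2ρ)^s = ofReal c * ofReal (2r)^α
    rw [hCdef, mul_assoc]
    congr 1
    rw [h2e, ENNReal.ofReal_rpow_of_pos (by linarith : (0:ℝ) < 2*ρ),
      ENNReal.ofReal_rpow_of_pos (by linarith : (0:ℝ) < 2*r),
      ← ENNReal.ofReal_mul (by positivity), ← Real.mul_rpow (by norm_num) (by linarith)]
    congr 1
    rw [show α = 2*s by rw [hsdef]; ring, Real.rpow_mul (by linarith : (0:ℝ) ≤ 2*r),
      show ((2:ℝ)*r) ^ (2:ℝ) = ((2:ℝ)*r) ^ (2:ℕ) by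
        rw [show (2:ℝ) = ((2:ℕ):ℝ) by norm_num, Real.rpow_natCast]]
    congr 1
    rw [mul_pow, hrdef, Real.sq_sqrt hρ0.le]
    ring
  -- the bad set is null
  have hbadset : μH[s] (E₀ ∩ {x : ℝ | ∃ r₀ > 0, ∀ ρ ∈ Set.Ioc (0:ℝ) r₀,
      Cval * ENNReal.ofReal (2*ρ) ^ s ≤ μH[s] (E₀ ∩ Metric.closedBall x ρ)}ᶜ) = 0 := by
    have hBnull : Snow.hausdorff m α ({x : Snow | ¬ Tendsto
        (fun r : ℝ => Snow.hausdorff m α (E ∩ Snow.cball m x r)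
          / ENNReal.ofReal (2 * r) ^ α) (𝓝[>] (0:ℝ)) (𝓝 1)} ∩ E) = 0 := by
      refine le_antisymm (le_trans (Measure.le_restrict_apply _ _) (le_of_eq ?_)) zero_le
      exact ae_iff.1 hae
    refine le_antisymm ?_ zero_le
    have hsubset : E₀ ∩ {x : ℝ | ∃ r₀ > 0, ∀ ρ ∈ Set.Ioc (0:ℝ) r₀,
        Cval * ENNReal.ofReal (2*ρ) ^ s ≤ μH[s] (E₀ ∩ Metric.closedBall x ρ)}ᶜ ⊆
        Snow.val '' ({x : Snow | ¬ Tendsto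
          (fun r : ℝ => Snow.hausdorff m α (E ∩ Snow.cball m x r)
            / ENNReal.ofReal (2 * r) ^ α) (𝓝[>] (0:ℝ)) (𝓝 1)} ∩ E) := by
      rintro y ⟨⟨x, hxE, rfl⟩, hyT⟩
      by_cases hxB : Tendsto (fun r : ℝ => Snow.hausdorff m α (E ∩ Snow.cball m x r)
          / ENNReal.ofReal (2 * r) ^ α) (𝓝[>] (0:ℝ)) (𝓝 1)
      · exact absurd (hpt x hxB) hyT
      · exact ⟨x, ⟨hxB, hxE⟩, rfl⟩
    refine le_trans (measure_mono hsubset) (le_of_eq ?_)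
    rw [← htrans]
    exact hBnull
  exact core_lemma hs hC1 hCtop E₀ hE0' hEfin' hbadset

end Aux
end

section
/- The function N₄ : ℝ² → ℝ, N₄(x,t) = (x⁴ + t²)^{1/4}, is a homogeneous norm on the parabolic plane: N₄(p) = 0 if and only if p = 0; N₄(−p) = N₄(p); N₄(p+q) ≤ N₄(p) + N₄(q) for all p,q ∈ ℝ²; and N₄(λx, λ²t) = λ·N₄(x,t) for all λ > 0 and (x,t) ∈ ℝ². -/
/-- The Koranyi-type norm on the parabolic plane: `N₄(x,t) = (x⁴ + t²)^{1/4}`. -/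
noncomputable def Nfour (p : ℝ × ℝ) : ℝ := (p.1 ^ 4 + p.2 ^ 2) ^ ((1 : ℝ) / 4)

lemma Nfour_eq_sqrt_abs (x t : ℝ) :
    Nfour (x, t) = Real.sqrt (‖(⟨x ^ 2, t⟩ : ℂ)‖) := by
  have h : (‖(⟨x ^ 2, t⟩ : ℂ)‖ : ℝ) = Real.sqrt (x ^ 4 + t ^ 2) := by
    rw [Complex.norm_def, Complex.normSq_mk]
    ring_nf
  simp only [Nfour]
  rw [h, Real.sqrt_eq_rpow, Real.sqrt_eq_rpow,
    ← Real.rpow_mul (by positivity : (0:ℝ) ≤ x ^ 4 + t ^ 2)]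
  norm_num

lemma abs_le_sqrt_abs (x t : ℝ) : |x| ≤ Real.sqrt (‖(⟨x ^ 2, t⟩ : ℂ)‖) := by
  have h1 : x ^ 2 ≤ ‖(⟨x ^ 2, t⟩ : ℂ)‖ := by
    have := Complex.abs_re_le_norm ⟨x ^ 2, t⟩
    simpa [abs_of_nonneg (sq_nonneg x)] using this
  calc |x| = Real.sqrt (x ^ 2) := by rw [Real.sqrt_sq_eq_abs]
    _ ≤ _ := Real.sqrt_le_sqrt h1

/-- `N₄(x,t) = (x⁴ + t²)^{1/4}` is a homogeneous norm on the
parabolic plane: it vanishes exactly at `0`, is symmetric, subadditive, and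
homogeneous for the parabolic dilations `δ_λ(x,t) = (λx, λ²t)`. -/
theorem statement_11 :
    (∀ p : ℝ × ℝ, Nfour p = 0 ↔ p = 0) ∧
    (∀ p : ℝ × ℝ, Nfour (-p) = Nfour p) ∧
    (∀ p q : ℝ × ℝ, Nfour (p + q) ≤ Nfour p + Nfour q) ∧
    (∀ c : ℝ, 0 < c → ∀ x t : ℝ, Nfour (c * x, c ^ 2 * t) = c * Nfour (x, t)) := by
  refine ⟨?_, ?_, ?_, ?_⟩
  · rintro ⟨x, t⟩
    simp only [Nfour]
    rw [Real.rpow_eq_zero (by positivity) (by norm_num)]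
    constructor
    · intro h
      have hx4 : x ^ 4 = 0 := by nlinarith [sq_nonneg t, sq_nonneg (x ^ 2)]
      have ht2 : t ^ 2 = 0 := by nlinarith [sq_nonneg (x ^ 2)]
      have hx : x = 0 := by
        have := pow_eq_zero_iff (n := 4) (by norm_num) |>.mp hx4
        exact this
      have ht : t = 0 := by
        have := pow_eq_zero_iff (n := 2) (by norm_num) |>.mp ht2
        exact this
      simp [hx, ht, Prod.ext_iff]
    · rintro h
      rw [Prod.ext_iff] at h
      simp at h
      simp [h.1, h.2]
  · rintro ⟨x, t⟩
    simp [Nfour]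
    ring_nf
  · rintro ⟨x, t⟩ ⟨y, s⟩
    have key : Nfour (x + y, t + s) ≤ Nfour (x, t) + Nfour (y, s) := by
      rw [Nfour_eq_sqrt_abs, Nfour_eq_sqrt_abs, Nfour_eq_sqrt_abs]
      set a := Real.sqrt (‖(⟨x ^ 2, t⟩ : ℂ)‖) with ha
      set b := Real.sqrt (‖(⟨y ^ 2, s⟩ : ℂ)‖) with hb
      have ha0 : 0 ≤ a := Real.sqrt_nonneg _
      have hb0 : 0 ≤ b := Real.sqrt_nonneg _
      have hz : (⟨(x + y) ^ 2, t + s⟩ : ℂ) = ⟨x ^ 2, t⟩ + ⟨y ^ 2, s⟩ + ⟨2 * x * y, 0⟩ := by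
        apply Complex.ext <;> simp <;> ring
      have htri : ‖(⟨(x + y) ^ 2, t + s⟩ : ℂ)‖ ≤
          ‖(⟨x ^ 2, t⟩ : ℂ)‖ + ‖(⟨y ^ 2, s⟩ : ℂ)‖ + 2 * |x| * |y| := by
        rw [hz]
        calc ‖(⟨x ^ 2, t⟩ + ⟨y ^ 2, s⟩ + ⟨2 * x * y, 0⟩ : ℂ)‖
            ≤ ‖(⟨x ^ 2, t⟩ + ⟨y ^ 2, s⟩ : ℂ)‖ + ‖(⟨2 * x * y, 0⟩ : ℂ)‖ :=
              norm_add_le _ _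
          _ ≤ ‖(⟨x ^ 2, t⟩ : ℂ)‖ + ‖(⟨y ^ 2, s⟩ : ℂ)‖ + ‖(⟨2 * x * y, 0⟩ : ℂ)‖ :=
              by gcongr; exact norm_add_le _ _
          _ = ‖(⟨x ^ 2, t⟩ : ℂ)‖ + ‖(⟨y ^ 2, s⟩ : ℂ)‖ + 2 * |x| * |y| := by
              have : ‖(⟨2 * x * y, 0⟩ : ℂ)‖ = |2 * x * y| := by
                have : (⟨2 * x * y, 0⟩ : ℂ) = ((2 * x * y : ℝ) : ℂ) := by
                  apply Complex.ext <;> simp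
                rw [this, Complex.norm_real, Real.norm_eq_abs]
              rw [this, abs_mul, abs_mul]
              norm_num
      have hxa : |x| ≤ a := abs_le_sqrt_abs x t
      have hyb : |y| ≤ b := abs_le_sqrt_abs y s
      have hsq : ‖(⟨(x + y) ^ 2, t + s⟩ : ℂ)‖ ≤ (a + b) ^ 2 := by
        have hA : ‖(⟨x ^ 2, t⟩ : ℂ)‖ = a ^ 2 := by
          rw [ha, Real.sq_sqrt (norm_nonneg _)]
        have hB : ‖(⟨y ^ 2, s⟩ : ℂ)‖ = b ^ 2 := by
          rw [hb, Real.sq_sqrt (norm_nonneg _)]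
        nlinarith [abs_nonneg x, abs_nonneg y]
      calc Real.sqrt (‖(⟨(x + y) ^ 2, t + s⟩ : ℂ)‖)
          ≤ Real.sqrt ((a + b) ^ 2) := Real.sqrt_le_sqrt hsq
        _ = a + b := by rw [Real.sqrt_sq (by positivity)]
    simpa using key
  · intro c hc x t
    simp only [Nfour]
    have h : (c * x) ^ 4 + (c ^ 2 * t) ^ 2 = c ^ 4 * (x ^ 4 + t ^ 2) := by ring
    rw [h, Real.mul_rpow (by positivity) (by positivity), ← Real.rpow_natCast c 4,
      ← Real.rpow_mul hc.le]
    norm_num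
end

section
/- The function N? : ℝ² → ℝ, N?(x,t) = max(|x|, |t|^{1/2} − sign(t)·x), where sign(t) is 1 for t > 0, −1 for t < 0 and 0 for t = 0, is a homogeneous norm on the parabolic plane: N?(p) ≥ 0 with equality if and only if p = 0; N?(−p) = N?(p); N?(p+q) ≤ N?(p) + N?(q) for all p,q ∈ ℝ²; and N?(λx, λ²t) = λ·N?(x,t) for all λ > 0 and (x,t) ∈ ℝ². -/
/-- The norm `N?(x,t) = max(|x|, √|t| - sign(t)·x)` on the parabolic plane. -/
noncomputable def Nquest (p : ℝ × ℝ) : ℝ :=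
  max |p.1| (Real.sqrt |p.2| - Real.sign p.2 * p.1)

private lemma Nquest_eq (p : ℝ × ℝ) :
    Nquest p = max (Real.sqrt (max p.2 0) - p.1) (Real.sqrt (max (-p.2) 0) + p.1) := by
  obtain ⟨x, t⟩ := p
  unfold Nquest
  simp only
  rcases lt_trichotomy t 0 with ht | ht | ht
  · rw [Real.sign_of_neg ht, abs_of_neg ht, max_eq_right ht.le,
      max_eq_left (by linarith : (0:ℝ) ≤ -t), Real.sqrt_zero]
    have hs : 0 ≤ Real.sqrt (-t) := Real.sqrt_nonneg _
    rcases le_total x 0 with hx | hx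
    · rw [abs_of_nonpos hx]; ring_nf
    · rw [abs_of_nonneg hx, max_eq_right (by linarith), max_eq_right (by linarith)]
      ring_nf
  · subst ht
    simp only [Real.sign_zero, zero_mul, abs_zero, Real.sqrt_zero, neg_zero, max_self,
      sub_zero, zero_add]
    rw [zero_sub, max_eq_left (abs_nonneg x), max_comm, ← abs_eq_max_neg]
  · rw [Real.sign_of_pos ht, abs_of_pos ht, max_eq_left ht.le,
      max_eq_right (by linarith : -t ≤ 0), Real.sqrt_zero]
    have hs : 0 ≤ Real.sqrt t := Real.sqrt_nonneg _
    rcases le_total x 0 with hx | hx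
    · rw [abs_of_nonpos hx, one_mul, zero_add, max_eq_right (by linarith : -x ≤ Real.sqrt t - x),
        max_eq_left (by linarith : x ≤ Real.sqrt t - x)]
    · rw [abs_of_nonneg hx, one_mul, zero_add, max_comm]

private lemma sqrt_pos_subadd (s t : ℝ) :
    Real.sqrt (max (s + t) 0) ≤ Real.sqrt (max s 0) + Real.sqrt (max t 0) := by
  have h1 : max (s + t) 0 ≤ max s 0 + max t 0 := by
    apply max_le (add_le_add (le_max_left _ _) (le_max_left _ _))
    positivity
  calc Real.sqrt (max (s + t) 0) ≤ Real.sqrt (max s 0 + max t 0) := Real.sqrt_le_sqrt h1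
    _ ≤ Real.sqrt (max s 0) + Real.sqrt (max t 0) := by
        have ha : (0:ℝ) ≤ max s 0 := le_max_right _ _
        have hb : (0:ℝ) ≤ max t 0 := le_max_right _ _
        have h := Real.sqrt_le_sqrt (show max s 0 + max t 0 ≤
            (Real.sqrt (max s 0) + Real.sqrt (max t 0)) ^ 2 by
          nlinarith [Real.sq_sqrt ha, Real.sq_sqrt hb, Real.sqrt_nonneg (max s 0),
            Real.sqrt_nonneg (max t 0)])
        rwa [Real.sqrt_sq (by positivity)] at h

/-- `N?(x,t) = max(|x|, |t|^{1/2} - sign(t)·x)` is a homogeneous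
norm on the parabolic plane: it is nonnegative, vanishes exactly at `0`, is
symmetric, subadditive, and homogeneous for the parabolic dilations
`δ_λ(x,t) = (λx, λ²t)`. -/
theorem statement_13 :
    (∀ p : ℝ × ℝ, 0 ≤ Nquest p) ∧
    (∀ p : ℝ × ℝ, Nquest p = 0 ↔ p = 0) ∧
    (∀ p : ℝ × ℝ, Nquest (-p) = Nquest p) ∧
    (∀ p q : ℝ × ℝ, Nquest (p + q) ≤ Nquest p + Nquest q) ∧
    (∀ c : ℝ, 0 < c → ∀ x t : ℝ, Nquest (c * x, c ^ 2 * t) = c * Nquest (x, t)) := by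
  have hnonneg : ∀ p : ℝ × ℝ, 0 ≤ Nquest p := by
    intro p
    rw [Nquest_eq]
    have h1 := Real.sqrt_nonneg (max p.2 0)
    have h2 := Real.sqrt_nonneg (max (-p.2) 0)
    have := le_max_left (Real.sqrt (max p.2 0) - p.1) (Real.sqrt (max (-p.2) 0) + p.1)
    have := le_max_right (Real.sqrt (max p.2 0) - p.1) (Real.sqrt (max (-p.2) 0) + p.1)
    linarith
  refine ⟨hnonneg, ?_, ?_, ?_, ?_⟩
  · intro p
    constructor
    · intro h
      rw [Nquest_eq] at h
      have h1 := le_max_left (Real.sqrt (max p.2 0) - p.1) (Real.sqrt (max (-p.2) 0) + p.1)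
      have h2 := le_max_right (Real.sqrt (max p.2 0) - p.1) (Real.sqrt (max (-p.2) 0) + p.1)
      rw [h] at h1 h2
      have h3 := Real.sqrt_nonneg (max p.2 0)
      have h4 := Real.sqrt_nonneg (max (-p.2) 0)
      have h5 : Real.sqrt (max p.2 0) = 0 := by linarith
      have h6 : Real.sqrt (max (-p.2) 0) = 0 := by linarith
      have h7 : max p.2 0 = 0 := by
        have := (Real.sqrt_eq_zero (le_max_right _ _)).mp h5
        exact this
      have h8 : max (-p.2) 0 = 0 := by
        have := (Real.sqrt_eq_zero (le_max_right _ _)).mp h6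
        exact this
      have ht : p.2 = 0 := by
        have := max_eq_right_iff.mp h7
        have := max_eq_right_iff.mp h8
        linarith
      have hx : p.1 = 0 := by rw [h5] at h1; rw [h6] at h2; linarith
      exact Prod.ext hx ht
    · rintro rfl
      simp [Nquest]
  · intro p
    rw [Nquest_eq, Nquest_eq]
    simp only [Prod.fst_neg, Prod.snd_neg, neg_neg]
    rw [max_comm]
    ring_nf
  · intro p q
    rw [Nquest_eq, Nquest_eq, Nquest_eq]
    have h1 := sqrt_pos_subadd p.2 q.2
    have h2 := sqrt_pos_subadd (-p.2) (-q.2)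
    have e2 : -(p + q).2 = -p.2 + -q.2 := by simp [Prod.snd_add]; ring
    apply max_le
    · have a1 := le_max_left (Real.sqrt (max p.2 0) - p.1) (Real.sqrt (max (-p.2) 0) + p.1)
      have a2 := le_max_left (Real.sqrt (max q.2 0) - q.1) (Real.sqrt (max (-q.2) 0) + q.1)
      simp only [Prod.fst_add, Prod.snd_add] at *
      linarith
    · have a1 := le_max_right (Real.sqrt (max p.2 0) - p.1) (Real.sqrt (max (-p.2) 0) + p.1)
      have a2 := le_max_right (Real.sqrt (max q.2 0) - q.1) (Real.sqrt (max (-q.2) 0) + q.1)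
      rw [e2] at *
      simp only [Prod.fst_add, Prod.snd_add] at *
      linarith
  · intro c hc x t
    rw [Nquest_eq, Nquest_eq]
    simp only
    have key : ∀ s : ℝ, Real.sqrt (max (c ^ 2 * s) 0) = c * Real.sqrt (max s 0) := by
      intro s
      have : max (c ^ 2 * s) 0 = c ^ 2 * max s 0 := by
        rcases le_total s 0 with hs | hs
        · rw [max_eq_right (by nlinarith), max_eq_right hs, mul_zero]
        · rw [max_eq_left (by positivity), max_eq_left hs]
      rw [this, Real.sqrt_mul (by positivity), Real.sqrt_sq hc.le]
    rw [show -(c ^ 2 * t) = c ^ 2 * (-t) by ring, key, key,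
      show c * Real.sqrt (max t 0) - c * x = c * (Real.sqrt (max t 0) - x) by ring,
      show c * Real.sqrt (max (-t) 0) + c * x = c * (Real.sqrt (max (-t) 0) + x) by ring]
    exact (mul_max_of_nonneg _ _ hc.le).symm
end

section
/- Consider ℝ² with the distance d∞((x,s),(y,t)) = max(|y−x|, |t−s|^{1/2}). There exists a set A ⊆ ℝ² whose diameter with respect to d∞ is at most 2 and whose 2-dimensional Lebesgue measure is strictly greater than the Lebesgue measure of the unit ball B̄ = {(x,t) : max(|x|, |t|^{1/2}) ≤ 1}. (Indeed, A = [−1,1] × [−2,2] has d∞-diameter 2 and Lebesgue measure 8, while B̄ = [−1,1] × [−1,1] has Lebesgue measure 4.) Hence the unit ball of d∞ is not isodiametric. -/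
open MeasureTheory

/-- The smooth-box distance on the parabolic plane. -/
noncomputable def dInf (p q : ℝ × ℝ) : ℝ := max |q.1 - p.1| (Real.sqrt |q.2 - p.2|)

/-- For the smooth-box distance
`d∞((x,s),(y,t)) = max(|y-x|, |t-s|^{1/2})` on `ℝ²`, there is a set of `d∞`-diameter
at most `2` whose Lebesgue measure is strictly larger than that of the unit ball
`{(x,t) : max(|x|, |t|^{1/2}) ≤ 1}`; hence the unit ball of `d∞` is not
isodiametric. -/
theorem statement_14 :
    ∃ A : Set (ℝ × ℝ),
      (∀ p ∈ A, ∀ q ∈ A, dInf p q ≤ 2) ∧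
      volume {p : ℝ × ℝ | max |p.1| (Real.sqrt |p.2|) ≤ 1} < volume A := by
  refine ⟨Set.Icc (-1) 1 ×ˢ Set.Icc (-4) 0, ?_, ?_⟩
  · rintro ⟨x, s⟩ ⟨hx, hs⟩ ⟨y, t⟩ ⟨hy, ht⟩
    simp only [Set.mem_Icc] at hx hs hy ht
    have h1 : |y - x| ≤ 2 := by
      rw [abs_le]; constructor <;> linarith
    have h2 : Real.sqrt |t - s| ≤ 2 := by
      have : |t - s| ≤ 4 := by rw [abs_le]; constructor <;> linarith
      calc Real.sqrt |t - s| ≤ Real.sqrt 4 := Real.sqrt_le_sqrt this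
        _ = 2 := by
          rw [show (4:ℝ) = 2^2 by norm_num, Real.sqrt_sq (by norm_num)]
    exact max_le h1 h2
  · have hball : {p : ℝ × ℝ | max |p.1| (Real.sqrt |p.2|) ≤ 1}
        = Set.Icc (-1) 1 ×ˢ Set.Icc (-1) 1 := by
      ext ⟨x, t⟩
      simp only [Set.mem_setOf_eq, Set.mem_prod, Set.mem_Icc, max_le_iff, ← abs_le]
      constructor
      · rintro ⟨h1, h2⟩
        refine ⟨h1, ?_⟩
        have := Real.sq_sqrt (abs_nonneg t)
        nlinarith [Real.sqrt_nonneg |t|]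
      · rintro ⟨h1, h2⟩
        exact ⟨h1, by
          calc Real.sqrt |t| ≤ Real.sqrt 1 := Real.sqrt_le_sqrt h2
            _ = 1 := Real.sqrt_one⟩
    rw [hball, show (volume : Measure (ℝ × ℝ)) = (volume : Measure ℝ).prod volume from rfl,
      Measure.prod_prod, Measure.prod_prod, Real.volume_Icc]
    norm_num
end

section
/- Let d be a metric on ℝ² that is translation-invariant (d(p+v, q+v) = d(p,q) for all p,q,v ∈ ℝ²) and homogeneous for the parabolic dilations (d(δ_λ p, δ_λ q) = λ·d(p,q) for all λ > 0, where δ_λ(x,t) = (λx, λ²t)). Let B = {p ∈ ℝ² : d(0,p) ≤ 1} be the closed unit ball, and let C ⊆ B be a convex set with C = −C. Then the set A = {(x, 2t) : (x,t) ∈ C} has d-diameter at most 2 and 2-dimensional Lebesgue measure equal to 2 times the Lebesgue measure of C. In particular, if the Lebesgue measure of C is strictly greater than half that of B, then A has diameter at most 2 and Lebesgue measure strictly greater than that of B, so B is not isodiametric for d. -/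
open MeasureTheory

/-- Let `d` be a translation-invariant distance on `ℝ²` that is
homogeneous for the parabolic dilations `δ_λ(x,t) = (λx, λ²t)`, let `B` be its
closed unit ball, and let `C ⊆ B` be convex and symmetric. Then
`A = δ₂((1/2)·C) = {(x, 2t) : (x,t) ∈ C}` has `d`-diameter at most `2` and Lebesgue
measure `2·|C|`; in particular, if `|C| > |B|/2` then `B` is not isodiametric. -/
theorem statement_16 (m : MetricSpace (ℝ × ℝ))
    (htrans : ∀ p q v : ℝ × ℝ, m.dist (p + v) (q + v) = m.dist p q)
    (hhom : ∀ c : ℝ, 0 < c → ∀ p q : ℝ × ℝ,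
      m.dist (c * p.1, c ^ 2 * p.2) (c * q.1, c ^ 2 * q.2) = c * m.dist p q)
    (C : Set (ℝ × ℝ))
    (hCB : C ⊆ {p : ℝ × ℝ | m.dist 0 p ≤ 1})
    (hconv : Convex ℝ C) (hsym : C = -C) :
    (∀ p ∈ (fun p : ℝ × ℝ => (p.1, 2 * p.2)) '' C,
      ∀ q ∈ (fun p : ℝ × ℝ => (p.1, 2 * p.2)) '' C, m.dist p q ≤ 2) ∧
    volume ((fun p : ℝ × ℝ => (p.1, 2 * p.2)) '' C) = 2 * volume C ∧
    (volume {p : ℝ × ℝ | m.dist 0 p ≤ 1} < 2 * volume C →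
      volume {p : ℝ × ℝ | m.dist 0 p ≤ 1} <
        volume ((fun p : ℝ × ℝ => (p.1, 2 * p.2)) '' C)) := by

  have hdiam : ∀ p ∈ (fun p : ℝ × ℝ => (p.1, 2 * p.2)) '' C,
      ∀ q ∈ (fun p : ℝ × ℝ => (p.1, 2 * p.2)) '' C, m.dist p q ≤ 2 := by
    rintro _ ⟨a, haC, rfl⟩ _ ⟨b, hbC, rfl⟩
    have hna : -a ∈ C := by rw [hsym]; simpa using haC
    set w : ℝ × ℝ := ((b.1 - a.1) / 2, (b.2 - a.2) / 2) with hw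
    have hwC : w ∈ C := by
      have := hconv hbC hna (by norm_num : (0:ℝ) ≤ 1/2) (by norm_num : (0:ℝ) ≤ 1/2)
        (by norm_num)
      convert this using 1
      simp [hw, Prod.ext_iff, Prod.smul_def]
      constructor <;> ring
    have h1 : m.dist (a.1, 2 * a.2) (b.1, 2 * b.2)
        = m.dist 0 (b.1 - a.1, 2 * b.2 - 2 * a.2) := by
      have := htrans 0 (b.1 - a.1, 2 * b.2 - 2 * a.2) (a.1, 2 * a.2)
      rw [← this]
      congr 1 <;> simp [Prod.ext_iff] <;> ring
    have h2 := hhom 2 (by norm_num) 0 w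
    have h3 : ((2:ℝ) * (0:ℝ×ℝ).1, (2:ℝ)^2 * (0:ℝ×ℝ).2) = (0:ℝ×ℝ) := by simp
    have h4 : ((2:ℝ) * w.1, (2:ℝ)^2 * w.2) = (b.1 - a.1, 2 * b.2 - 2 * a.2) := by
      simp [hw, Prod.ext_iff]; constructor <;> ring
    rw [h3, h4] at h2
    rw [h1, h2]
    have := hCB hwC
    simp only [Set.mem_setOf_eq] at this
    linarith
  have hvol : volume ((fun p : ℝ × ℝ => (p.1, 2 * p.2)) '' C) = 2 * volume C := by
    set f : (ℝ × ℝ) →ₗ[ℝ] (ℝ × ℝ) :=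
      (LinearMap.id : ℝ →ₗ[ℝ] ℝ).prodMap ((2:ℝ) • LinearMap.id) with hfdef
    have hf : (fun p : ℝ × ℝ => (p.1, 2 * p.2)) = f := by
      ext p <;> simp [hfdef]
    have hdet : LinearMap.det f = 2 := by
      let b : Module.Basis (Unit ⊕ Unit) ℝ (ℝ × ℝ) :=
        (Module.Basis.singleton Unit ℝ).prod (Module.Basis.singleton Unit ℝ)
      rw [← LinearMap.det_toMatrix b, hfdef, LinearMap.toMatrix_prodMap,
        Matrix.det_fromBlocks_zero₂₁]
      simp [LinearMap.toMatrix, Module.Basis.singleton]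
    rw [hf, Measure.addHaar_image_linearMap, hdet]
    norm_num
  exact ⟨hdiam, hvol, fun h => by rw [hvol]; exact h⟩
end

section
/- Let ξ be a real number with 19/10 < ξ < 2. There exists ε₀ > 0 such that for every ε ∈ (0, ε₀] the following holds. Let N_ε(x₁,x₂) = max(‖x₁‖, ε·|x₂|^{1/2}) on ℝ² × ℝ, where ‖·‖ is the Euclidean norm on ℝ², and let d_ε(p,q) = N_ε(p⁻¹ * q) with * the Heisenberg product and p⁻¹ = (−p₁,−p₂). Then the set G = {(x₁,x₂) : ‖x₁‖ ≤ 1 and ε²·|x₂| ≤ ξ} contains the unit ball {p : N_ε(p) ≤ 1} and satisfies d_ε(p,q) ≤ 2 for all p, q ∈ G. -/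
/-- The Euclidean norm on `ℝ²`. -/
noncomputable def enorm2 (a : ℝ × ℝ) : ℝ := Real.sqrt (a.1 ^ 2 + a.2 ^ 2)

/-- The group inverse of the first Heisenberg group. -/
noncomputable def heisInv (p : (ℝ × ℝ) × ℝ) : (ℝ × ℝ) × ℝ := (-p.1, -p.2)

/-- The smooth-box homogeneous norm `N_ε(x₁,x₂) = max(‖x₁‖, ε|x₂|^{1/2})`. -/
noncomputable def Neps (ε : ℝ) (x : (ℝ × ℝ) × ℝ) : ℝ :=
  max (enorm2 x.1) (ε * Real.sqrt |x.2|)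

/-- The left-invariant distance induced by the smooth-box norm `N_ε`. -/
noncomputable def dEps (ε : ℝ) (p q : (ℝ × ℝ) × ℝ) : ℝ := Neps ε (heisMul (heisInv p) q)


lemma enorm2_nonneg (a : ℝ × ℝ) : 0 ≤ enorm2 a := Real.sqrt_nonneg _

lemma sq_enorm2 (a : ℝ × ℝ) : enorm2 a ^ 2 = a.1 ^ 2 + a.2 ^ 2 := by
  unfold enorm2; rw [Real.sq_sqrt (by positivity)]

lemma abs_dot_le (a b : ℝ × ℝ) : |a.1 * b.1 + a.2 * b.2| ≤ enorm2 a * enorm2 b := by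
  rw [← Real.sqrt_sq_eq_abs]
  unfold enorm2
  rw [← Real.sqrt_mul (by positivity)]
  exact Real.sqrt_le_sqrt (by nlinarith [sq_nonneg (a.1 * b.2 - a.2 * b.1)])

lemma abs_omega_le (a b : ℝ × ℝ) : |heisOmega a b| ≤ enorm2 a * enorm2 b := by
  rw [← Real.sqrt_sq_eq_abs]
  unfold enorm2 heisOmega
  rw [← Real.sqrt_mul (by positivity)]
  exact Real.sqrt_le_sqrt (by nlinarith [sq_nonneg (a.1 * b.1 + a.2 * b.2)])

lemma enorm2_add_le (a b : ℝ × ℝ) : enorm2 (a + b) ≤ enorm2 a + enorm2 b := by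
  have hd := abs_dot_le a b
  have h1 := enorm2_nonneg a
  have h2 := enorm2_nonneg b
  have key : enorm2 (a + b) ^ 2 ≤ (enorm2 a + enorm2 b) ^ 2 := by
    rw [sq_enorm2]
    simp only [Prod.fst_add, Prod.snd_add]
    have h3 := sq_enorm2 a
    have h4 := sq_enorm2 b
    have h5 : a.1 * b.1 + a.2 * b.2 ≤ enorm2 a * enorm2 b := (abs_le.mp hd).2
    nlinarith
  have := Real.sqrt_le_sqrt key
  rwa [Real.sqrt_sq (enorm2_nonneg _), Real.sqrt_sq (by positivity)] at this

lemma enorm2_neg (a : ℝ × ℝ) : enorm2 (-a) = enorm2 a := by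
  unfold enorm2; simp [neg_pow]

/-- Let `19/10 < ξ < 2`. There is `ε₀ > 0` such that for every
`ε ∈ (0, ε₀]`, the set `G = {(x₁,x₂) : ‖x₁‖ ≤ 1 and ε²|x₂| ≤ ξ}` contains the unit
ball of the smooth-box norm `N_ε` and has `d_ε`-diameter at most `2`. -/
theorem statement_18 (ξ : ℝ) (hξ₁ : 19 / 10 < ξ) (hξ₂ : ξ < 2) :
    ∃ ε₀ : ℝ, 0 < ε₀ ∧ ∀ ε : ℝ, 0 < ε → ε ≤ ε₀ →
      ({p : (ℝ × ℝ) × ℝ | Neps ε p ≤ 1} ⊆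
        {x : (ℝ × ℝ) × ℝ | enorm2 x.1 ≤ 1 ∧ ε ^ 2 * |x.2| ≤ ξ}) ∧
      ∀ p ∈ {x : (ℝ × ℝ) × ℝ | enorm2 x.1 ≤ 1 ∧ ε ^ 2 * |x.2| ≤ ξ},
        ∀ q ∈ {x : (ℝ × ℝ) × ℝ | enorm2 x.1 ≤ 1 ∧ ε ^ 2 * |x.2| ≤ ξ},
          dEps ε p q ≤ 2 := by
  have hξ0 : 0 < 2 - ξ := by linarith
  refine ⟨Real.sqrt (2 - ξ), Real.sqrt_pos.mpr hξ0, fun ε hε hεle => ?_⟩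
  have hε2 : ε ^ 2 ≤ 2 - ξ := by
    have := pow_le_pow_left₀ (le_of_lt hε) hεle 2
    rwa [Real.sq_sqrt (le_of_lt hξ0)] at this
  constructor
  · intro p hp
    simp only [Set.mem_setOf_eq, Neps, max_le_iff] at hp ⊢
    refine ⟨hp.1, ?_⟩
    have h3 : (ε * Real.sqrt |p.2|) ^ 2 ≤ 1 ^ 2 := pow_le_pow_left₀ (by positivity) hp.2 2
    rw [mul_pow, Real.sq_sqrt (abs_nonneg _)] at h3
    nlinarith
  · intro p hp q hq
    simp only [Set.mem_setOf_eq] at hp hq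
    unfold dEps Neps heisMul heisInv
    simp only [max_le_iff]
    constructor
    · calc enorm2 (-p.1 + q.1) ≤ enorm2 (-p.1) + enorm2 q.1 := enorm2_add_le _ _
        _ = enorm2 p.1 + enorm2 q.1 := by rw [enorm2_neg]
        _ ≤ 2 := by linarith [hp.1, hq.1]
    · set t : ℝ := -p.2 + q.2 + 2 * heisOmega (-p.1) q.1 with ht
      have hω : |heisOmega (-p.1) q.1| ≤ 1 := by
        calc |heisOmega (-p.1) q.1| ≤ enorm2 (-p.1) * enorm2 q.1 := abs_omega_le _ _
          _ = enorm2 p.1 * enorm2 q.1 := by rw [enorm2_neg]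
          _ ≤ 1 * 1 := by
              exact mul_le_mul hp.1 hq.1 (enorm2_nonneg _) (by linarith [hp.1, enorm2_nonneg p.1])
          _ = 1 := one_mul 1
      have habs : |t| ≤ |p.2| + |q.2| + 2 * |heisOmega (-p.1) q.1| := by
        calc |t| ≤ |-p.2 + q.2| + |2 * heisOmega (-p.1) q.1| := abs_add_le _ _
          _ ≤ (|-p.2| + |q.2|) + |2 * heisOmega (-p.1) q.1| := by
              exact add_le_add_left (abs_add_le (-p.2) q.2) _
          _ = |p.2| + |q.2| + 2 * |heisOmega (-p.1) q.1| := by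
              rw [abs_neg, abs_mul]; norm_num
    -- ε² |t| ≤ 4
      have hεt : ε ^ 2 * |t| ≤ 4 := by
        have h1 : ε ^ 2 * |p.2| ≤ ξ := hp.2
        have h2 : ε ^ 2 * |q.2| ≤ ξ := hq.2
        have h3 : ε ^ 2 * |t| ≤ ε ^ 2 * (|p.2| + |q.2| + 2 * |heisOmega (-p.1) q.1|) := by
          exact mul_le_mul_of_nonneg_left habs (by positivity)
        nlinarith [abs_nonneg (heisOmega (-p.1) q.1)]
      have hte : |t| ≤ (2 / ε) ^ 2 := by
        rw [div_pow, le_div_iff₀ (by positivity)]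
        nlinarith
      calc ε * Real.sqrt |t| ≤ ε * Real.sqrt ((2 / ε) ^ 2) := by
            exact mul_le_mul_of_nonneg_left (Real.sqrt_le_sqrt hte) (le_of_lt hε)
        _ = ε * (2 / ε) := by rw [Real.sqrt_sq (by positivity)]
        _ = 2 := by field_simp
end
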